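/- Let R be an integral domain, M a finitely generated R-module, and N a submodule of M. Then there exists a nonzero element r of R and elements v_1,...,v_n of N such that the localized module R[1/r] ⊗ N is a free R[1/r]-module with basis the images of v_1,...,v_n, and R[1/r] ⊗ M is the direct sum of R[1/r] ⊗ N and another free R[1/r]-module. -/

import Mathlib

/-!
Over the fraction field `K` of `R`, choose `v i ∈ N` whose images form a basis of `K ⊗ N` and
`w j ∈ M` whose images form a basis of `K ⊗ (M ⧸ N)`. Since `R ⊆ K`, the `v i` are linearly
independent over `R` and the `w j` are linearly independent modulo `N`, and both properties
survive every localization of `R`. Together the `v i` and `w j` span `K ⊗ M`; as `M` is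
finite, the cokernel of their span is then killed by a single `r ≠ 0`, so they already span
`R[1/r] ⊗ M`. There the span of the `w j` is a free complement of `R[1/r] ⊗ N`, which forces
`R[1/r] ⊗ N` to be the span of the `v i`.
-/

open LocalizedModule

open nonZeroDivisors Submodule Set

theorem LinearIndependent.localized_of_fractionRing {R M MK MS ι : Type*} [CommRing R]
    (S : Submonoid R) [AddCommGroup M] [Module R M] [AddCommGroup MK] [Module R MK]
    [Module (FractionRing R) MK] [IsScalarTower R (FractionRing R) MK] [AddCommGroup MS]
    [Module R MS] [Module (Localization S) MS] [IsScalarTower R (Localization S) MS]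
    (fK : M →ₗ[R] MK) (fS : M →ₗ[R] MS) [IsLocalizedModule S fS] {x : ι → M}
    (h : LinearIndependent (FractionRing R) (fK ∘ x)) :
    LinearIndependent (Localization S) (fS ∘ x) :=
  ((h.restrict_scalars' R).of_comp fK).of_isLocalizedModule (Localization S) S fS

namespace Submodule

section Ring

variable {A V : Type*} [Ring A] [AddCommGroup V] [Module A V]

theorem sup_span_range_eq_top_of_mkQ {ι : Type*} (P : Submodule A V) {x : ι → V}
    (h : span A (range (P.mkQ ∘ x)) = ⊤) : P ⊔ span A (range x) = ⊤ := by
  rw [← comap_map_mkQ, map_span, ← range_comp, h, comap_top]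

theorem exists_basis_isCompl_of_linearIndependent_mkQ {ι κ : Type*} (N : Submodule A V)
    {v : ι → V} {w : κ → V} (hvN : ∀ i, v i ∈ N) (hv : LinearIndependent A v)
    (hw : LinearIndependent A (N.mkQ ∘ w)) (hspan : span A (range v ∪ range w) = ⊤) :
    (∃ b : Module.Basis ι A N, ∀ i, (b i : V) = v i) ∧
      ∃ C : Submodule A V, IsCompl N C ∧ Module.Free A C := by
  have hdisj : Disjoint N (span A (range w)) := by
    simpa using (range_ker_disjoint hw).symm
  have hcodisj : Codisjoint (span A (range v)) (span A (range w)) := by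
    rw [codisjoint_iff, ← span_union, hspan]
  have hN : span A (range v) = N :=
    (le_iff_eq_of_codisjoint_of_disjoint hcodisj hdisj.symm).mp
      (span_le.mpr (range_subset_iff.mpr hvN))
  exact ⟨⟨(Module.Basis.span hv).map (LinearEquiv.ofEq _ _ hN), fun i => by simp⟩,
    span A (range w), ⟨hdisj, hN ▸ hcodisj⟩, .of_basis (Module.Basis.span (hw.of_comp _))⟩

end Ring

variable {R M : Type*} [CommRing R] [AddCommGroup M] [Module R M]

theorem localized_eq_top_iff_subsingleton (S : Submonoid R) (P : Submodule R M) :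
    P.localized S = ⊤ ↔ Subsingleton (LocalizedModule S (M ⧸ P)) := by
  rw [← Quotient.subsingleton_iff, (localizedQuotientEquiv S P).toEquiv.subsingleton_congr]

theorem exists_localized_away_eq_top [Module.Finite R M] (p : Ideal R) [p.IsPrime]
    (P : Submodule R M) (h : P.localized p.primeCompl = ⊤) :
    ∃ r ∉ p, P.localized (.powers r) = ⊤ := by
  simp_rw [localized_eq_top_iff_subsingleton] at h ⊢
  exact LocalizedModule.exists_subsingleton_away p

variable [IsDomain R] [Module.Finite R M]

theorem exists_ne_zero_span_away_eq_top {s : Set M}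
    (h : span (FractionRing R) (mkLinearMap R⁰ M '' s) = ⊤) :
    ∃ r : R, r ≠ 0 ∧ span (Localization.Away r) (mkLinearMap (.powers r) M '' s) = ⊤ := by
  obtain ⟨r, hr, hspan⟩ := exists_localized_away_eq_top ⊥ (span R s) (by
    rw [Ideal.primeCompl_bot]
    exact (localized'_span _ _ _ s).trans h)
  exact ⟨r, hr, (localized'_span _ _ _ s).symm.trans hspan⟩

theorem exists_fractionRing_adapted_families (N : Submodule R M) :
    ∃ (n m : ℕ) (v : Fin n → M) (w : Fin m → M), (∀ i, v i ∈ N) ∧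
      LinearIndependent (FractionRing R) (mkLinearMap R⁰ M ∘ v) ∧
      LinearIndependent (FractionRing R) (N.toLocalizedQuotient R⁰ ∘ N.mkQ ∘ w) ∧
      span (FractionRing R) (mkLinearMap R⁰ M '' (range v ∪ range w)) = ⊤ := by
  set f := mkLinearMap R⁰ M
  obtain ⟨v₀, hv₀N, hv₀span, hv₀⟩ :=
    exists_fun_fin_finrank_span_eq (FractionRing R) (f '' N)
  choose v hvN hfv using hv₀N
  obtain ⟨w₀, hw₀M, hw₀span, hw₀⟩ :=
    exists_fun_fin_finrank_span_eq (FractionRing R) (range (N.toLocalizedQuotient R⁰ ∘ N.mkQ))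
  choose w hfw using hw₀M
  have hfv : f ∘ v = v₀ := funext hfv
  have hfw : N.toLocalizedQuotient R⁰ ∘ N.mkQ ∘ w = w₀ := funext hfw
  have hNK : span (FractionRing R) (range (f ∘ v)) = N.localized R⁰ := by
    rw [hfv, hv₀span]
    exact (localized'_eq_span ..).symm
  have hMNK : span (FractionRing R) (range ((N.localized R⁰).mkQ ∘ f ∘ w)) = ⊤ := by
    rw [show (N.localized R⁰).mkQ ∘ f ∘ w = w₀ from hfw, hw₀span,
      N.mkQ_surjective.range_comp, ← image_univ]
    exact span_eq_top_of_isLocalizedModule _ R⁰ _ span_univ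
  refine ⟨_, _, v, w, hvN, hfv ▸ hv₀, hfw ▸ hw₀, ?_⟩
  rw [image_union, span_union, ← range_comp, ← range_comp, hNK]
  exact sup_span_range_eq_top_of_mkQ _ hMNK

end Submodule

theorem generic_freeness (R : Type*) [CommRing R] [IsDomain R]
    (M : Type*) [AddCommGroup M] [Module R M] [Module.Finite R M] (N : Submodule R M) :
    ∃ (r : R), r ≠ 0 ∧ ∃ (n : ℕ) (v : Fin n → M), (∀ i, v i ∈ N) ∧
      (∃ b : Module.Basis (Fin n) (Localization.Away r)
          (N.localized (Submonoid.powers r)),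
        ∀ i, (b i : LocalizedModule (Submonoid.powers r) M)
          = mkLinearMap (Submonoid.powers r) M (v i)) ∧
      (∃ C : Submodule (Localization.Away r) (LocalizedModule (Submonoid.powers r) M),
        IsCompl (N.localized (Submonoid.powers r)) C ∧
          Module.Free (Localization.Away r) C) := by
  obtain ⟨n, m, v, w, hvN, hv, hw, hspan⟩ := N.exists_fractionRing_adapted_families
  obtain ⟨r, hr, hspan⟩ := exists_ne_zero_span_away_eq_top hspan
  set S := Submonoid.powers r
  have hvS : ∀ i, mkLinearMap S M (v i) ∈ N.localized S := fun i =>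
    ⟨v i, hvN i, 1, IsLocalizedModule.mk'_one _ _ _⟩
  rw [image_union, ← range_comp, ← range_comp] at hspan
  exact ⟨r, hr, n, v, hvN, exists_basis_isCompl_of_linearIndependent_mkQ _ hvS
    (hv.localized_of_fractionRing S _ _)
    (hw.localized_of_fractionRing S _ (N.toLocalizedQuotient S)) hspan⟩
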